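/- arXiv:2006.07955 — 7 statements merged into one kernel-verified Lean document; each statement's English description precedes it below -/
import Mathlib

section
/- Let S be a set of pmfs on countable sets such that the greatest lower bound ⋀S with respect to majorization exists. Then the pmf (⋀S) × Geom_{1/2} is an underlying distribution of a coupling of S, i.e., for every p ∈ S, p is an aggregation of (⋀S) × Geom_{1/2} ((⋀S) × Geom_{1/2} ⊑ p). -/
open scoped ENNReal Classical
open Filter

namespace MEC

/-- A probability mass function on `α`: (nonnegative) masses summing to `1`. -/
def IsPMF {α : Type*} (p : α → ℝ≥0∞) : Prop := ∑' x, p x = 1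

/-- `p` is an aggregation of `q`, written `q ⊑ p`: there is a map `g` sending the support of
`q` into the support of `p` such that `p` is the pushforward of `q` under `g`. -/
def Agg {α β : Type*} (q : α → ℝ≥0∞) (p : β → ℝ≥0∞) : Prop :=
  ∃ g : α → β, (∀ x, q x ≠ 0 → p (g x) ≠ 0) ∧
    ∀ y, p y = ∑' x, if g x = y then q x else 0

/-- Sum of the `k` largest masses of `p`, i.e. `max_{A, |A| ≤ k} p(A)`. -/
noncomputable def topk {α : Type*} (p : α → ℝ≥0∞) (k : ℕ) : ℝ≥0∞ :=
  ⨆ (A : Finset α) (_ : A.card ≤ k), ∑ x ∈ A, p x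

/-- `q` is majorized by `p`, written `q ⪯ p`: for every `k`, the sum of the `k` largest
masses of `q` is at most the sum of the `k` largest masses of `p`. -/
def Majorized {α β : Type*} (q : α → ℝ≥0∞) (p : β → ℝ≥0∞) : Prop :=
  ∀ k : ℕ, topk q k ≤ topk p k

/-- Product pmf `(q × r)(x,z) = q(x) · r(z)`. -/
noncomputable def prodFun {α β : Type*} (q : α → ℝ≥0∞) (r : β → ℝ≥0∞) : α × β → ℝ≥0∞ :=
  fun z => q z.1 * r z.2

/-- `Geom_{1/2}` on `ℕ+ = {1,2,3,...}`, with mass `2^{-x}` at `x`. -/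
noncomputable def geomHalf : ℕ+ → ℝ≥0∞ := fun x => 2⁻¹ ^ (x : ℕ)

/-- Capped geometric distribution `CGeom_{1/2,k}` on `{1,...,k} ⊆ ℕ+`. -/
noncomputable def cgeomHalf (k : ℕ) : ℕ+ → ℝ≥0∞ := fun x =>
  if (x : ℕ) < k then 2⁻¹ ^ (x : ℕ) else if (x : ℕ) = k then 2⁻¹ ^ (k - 1) else 0

/-- `inf_{p ∈ S} max_{A ⊆ supp(p), |A| ≤ k} p(A)`. -/
noncomputable def infTopk {α : Type*} (S : Set (α → ℝ≥0∞)) (k : ℕ) : ℝ≥0∞ :=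
  ⨅ p ∈ S, topk p k

/-- The greatest lower bound `⋀S` of `S` with respect to majorization, as a pmf on
`ℕ+ = {1,2,...}`, with `(⋀S)(k) = inf_{p∈S} max_{|A|≤k} p(A) − inf_{p∈S} max_{|A|≤k−1} p(A)`. -/
noncomputable def glb {α : Type*} (S : Set (α → ℝ≥0∞)) : ℕ+ → ℝ≥0∞ :=
  fun k => infTopk S (k : ℕ) - infTopk S ((k : ℕ) - 1)

/-- Condition for the existence of `⋀S`:
`lim_{k→∞} inf_{p∈S} max_{A⊆supp(p), |A|≤k} p(A) = 1`. -/
def GlbExists {α : Type*} (S : Set (α → ℝ≥0∞)) : Prop :=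
  Tendsto (fun k => infTopk S k) atTop (nhds 1)

/-- Base-2 logarithm on `ℝ≥0∞` (intended for arguments in `[1,∞]`). -/
noncomputable def log2 (x : ℝ≥0∞) : ℝ≥0∞ :=
  if x = ∞ then ∞ else ENNReal.ofReal (Real.logb 2 x.toReal)

/-- Shannon entropy (base 2): `H(p) = Σ_x p(x) log₂ (1/p(x))`. -/
noncomputable def shannon {α : Type*} (p : α → ℝ≥0∞) : ℝ≥0∞ :=
  ∑' x, p x * log2 (p x)⁻¹

/-- Rényi entropy of order `a ∈ [0,∞]` (base 2):
`H_a(p) = (1/(1−a)) log₂ Σ_{x ∈ supp(p)} p(x)^a` for `a ∉ {1,∞}` (for `a > 1` this is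
written in the equivalent form `(1/(a−1)) log₂ (Σ_{x ∈ supp(p)} p(x)^a)⁻¹` so that it is
nonnegative), Shannon entropy for `a = 1`, and `−log₂ max_x p(x)` for `a = ∞`. -/
noncomputable def renyi {α : Type*} (p : α → ℝ≥0∞) (a : ℝ≥0∞) : ℝ≥0∞ :=
  if a = 1 then shannon p
  else if a = ∞ then log2 (⨆ x, p x)⁻¹
  else if a < 1 then log2 (∑' x, if p x = 0 then 0 else p x ^ a.toReal) * (1 - a)⁻¹
  else log2 (∑' x, if p x = 0 then 0 else p x ^ a.toReal)⁻¹ * (a - 1)⁻¹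

/-- `q ∈ Γ̃(S)`: `q` (a pmf over `ℕ`, without loss of generality) is an underlying
distribution of a coupling of `S`, i.e. `q ⊑ p` for every `p ∈ S`. -/
def UnderlyingCoupling {α : Type*} (S : Set (α → ℝ≥0∞)) (q : ℕ → ℝ≥0∞) : Prop :=
  IsPMF q ∧ ∀ p ∈ S, Agg q p

/-- `H*_a(S) = inf_{q ∈ Γ̃(S)} H_a(q)`, the minimum Rényi entropy of couplings of `S`. -/
noncomputable def minRenyi {α : Type*} (S : Set (α → ℝ≥0∞)) (a : ℝ≥0∞) : ℝ≥0∞ :=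
  ⨅ (q : ℕ → ℝ≥0∞) (_ : UnderlyingCoupling S q), renyi q a

/-!
Write `q = ⋀S`. The map `k ↦ inf_{p ∈ S} max_{|A| ≤ k} p(A)` is concave, so `q` is nonincreasing
and, for `p ∈ S`, any `k` masses of `q` sum to at most `max_{|A| ≤ k} p(A)`.

The pieces `q(i) 2^{-z}` of `q × Geom_{1/2}` are packed greedily into the bins `p(y)`, largest piece
first, each into some bin that still has room for it. This never gets stuck: if a piece of mass
`s > 0` fits nowhere, let `C` be the mass packed before it and `K` the rows of these pieces and of
the stuck one. All of them have mass `≥ s`, and such pieces leave a dyadic remainder `≥ s` in each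
row, so `C + s + |K| s ≤ q(K) ≤ max_{|A| ≤ |K|} p(A)`; but every bin has room `< s`, so the right
side is at most `C + |K| s`. Once every piece is packed, the loads are bounded by the bins and have
the same total mass, so they fill the bins exactly.
-/

open Finset Function

section TopK

variable {α : Type*} (p : α → ℝ≥0∞)

lemma sum_le_topk {A : Finset α} {k : ℕ} (h : A.card ≤ k) : ∑ x ∈ A, p x ≤ topk p k :=
  le_iSup₂_of_le A h le_rfl

lemma topk_mono : Monotone (topk p) := fun _ _ h =>
  iSup₂_le fun _ hA => sum_le_topk p (hA.trans h)

lemma topk_zero : topk p 0 = 0 :=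
  nonpos_iff_eq_zero.1 <| iSup₂_le fun A hA => by
    rw [card_eq_zero.1 (Nat.le_zero.1 hA), sum_empty]

lemma topk_le_tsum (k : ℕ) : topk p k ≤ ∑' x, p x :=
  iSup₂_le fun A _ => ENNReal.sum_le_tsum A

lemma topk_add_two_add_topk_le (k : ℕ) :
    topk p (k + 2) + topk p k ≤ topk p (k + 1) + topk p (k + 1) := by
  refine ENNReal.biSup_add_biSup_le' ⟨∅, by simp⟩ ⟨∅, by simp⟩ fun A hA B hB => ?_
  rcases Nat.lt_or_ge (k + 1) A.card with hA' | hA'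
  · obtain ⟨x, hxA, hxB⟩ := not_subset.1 fun hAB : A ⊆ B => by
      have := card_le_card hAB
      omega
    calc ∑ x ∈ A, p x + ∑ x ∈ B, p x = ∑ y ∈ A.erase x, p y + ∑ y ∈ insert x B, p y := by
          rw [sum_insert hxB, ← sum_erase_add A p hxA]
          ring
      _ ≤ topk p (k + 1) + topk p (k + 1) := by
          gcongr <;> apply sum_le_topk
          · rw [card_erase_of_mem hxA]; omega
          · rw [card_insert_of_notMem hxB]; omega
  · exact add_le_add (sum_le_topk p hA') (sum_le_topk p (by omega))

lemma topk_le_tsum_add_mul {u : α → ℝ≥0∞} {s : ℝ≥0∞} (h : ∀ y, p y ≤ u y + s) (k : ℕ) :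
    topk p k ≤ ∑' y, u y + k * s :=
  iSup₂_le fun A hA => calc
    ∑ y ∈ A, p y ≤ ∑ y ∈ A, (u y + s) := sum_le_sum fun y _ => h y
    _ = ∑ y ∈ A, u y + A.card * s := by rw [sum_add_distrib, sum_const, nsmul_eq_mul]
    _ ≤ ∑' y, u y + k * s := by
        gcongr
        exact ENNReal.sum_le_tsum A

end TopK

section Glb

variable {α : Type*} {S : Set (α → ℝ≥0∞)}

lemma infTopk_le {p : α → ℝ≥0∞} (hp : p ∈ S) (k : ℕ) : infTopk S k ≤ topk p k :=
  iInf₂_le p hp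

lemma infTopk_mono (S : Set (α → ℝ≥0∞)) : Monotone (infTopk S) := fun _ _ h =>
  iInf₂_mono fun p _ => topk_mono p h

lemma infTopk_zero (hS : S.Nonempty) : infTopk S 0 = 0 :=
  let ⟨p, hp⟩ := hS
  nonpos_iff_eq_zero.1 ((infTopk_le hp 0).trans_eq (topk_zero p))

lemma infTopk_ne_top {p : α → ℝ≥0∞} (hp : p ∈ S) (hp1 : IsPMF p) (k : ℕ) : infTopk S k ≠ ∞ :=
  ne_top_of_le_ne_top ENNReal.one_ne_top ((infTopk_le hp k).trans ((topk_le_tsum p k).trans_eq hp1))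

lemma infTopk_add_two_add_infTopk_le (k : ℕ) :
    infTopk S (k + 2) + infTopk S k ≤ infTopk S (k + 1) + infTopk S (k + 1) :=
  calc infTopk S (k + 2) + infTopk S k ≤ ⨅ p ∈ S, 2 * topk p (k + 1) :=
        le_iInf₂ fun p hp => two_mul (topk p (k + 1)) ▸
          (add_le_add (infTopk_le hp _) (infTopk_le hp _)).trans (topk_add_two_add_topk_le p k)
    _ = infTopk S (k + 1) + infTopk S (k + 1) := by
        simp only [infTopk, ← two_mul, ENNReal.mul_iInf_of_ne two_ne_zero ENNReal.ofNat_ne_top]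

lemma glb_succPNat (S : Set (α → ℝ≥0∞)) (n : ℕ) :
    glb S n.succPNat = infTopk S (n + 1) - infTopk S n := rfl

lemma sum_range_glb (hS : S.Nonempty) (k : ℕ) :
    ∑ n ∈ range k, glb S n.succPNat = infTopk S k := by
  induction k with
  | zero => simp [infTopk_zero hS]
  | succ k ih =>
    rw [sum_range_succ, ih, glb_succPNat, add_tsub_cancel_of_le (infTopk_mono S k.le_succ)]

lemma glb_antitone {p : α → ℝ≥0∞} (hp : p ∈ S) (hp1 : IsPMF p) : Antitone (glb S) := by
  have hnat : Antitone fun n : ℕ => glb S n.succPNat := antitone_nat_of_succ_le fun n => by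
    rw [glb_succPNat, glb_succPNat]
    refine tsub_le_iff_right.2 (ENNReal.le_of_add_le_add_right (infTopk_ne_top hp hp1 n) ?_)
    calc infTopk S (n + 1 + 1) + infTopk S n ≤ infTopk S (n + 1) + infTopk S (n + 1) :=
          infTopk_add_two_add_infTopk_le n
      _ = infTopk S (n + 1) - infTopk S n + infTopk S n + infTopk S (n + 1) := by
          rw [tsub_add_cancel_of_le (infTopk_mono S n.le_succ)]
      _ = _ := add_right_comm _ _ _
  intro i j hij
  rw [← PNat.succPNat_natPred i, ← PNat.succPNat_natPred j]
  exact hnat (PNat.natPred_le_natPred.2 hij)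

lemma sum_le_sum_range_succPNat_of_antitone {M : Type*} [AddCommMonoid M] [PartialOrder M]
    [IsOrderedAddMonoid M] {f : ℕ+ → M} (hf : Antitone f) (K : Finset ℕ+) :
    ∑ i ∈ K, f i ≤ ∑ n ∈ range K.card, f n.succPNat := by
  refine Finset.induction_on_max K (by simp) fun a K hlt ih => ?_
  have haK : a ∉ K := fun h => lt_irrefl a (hlt a h)
  have hcard : K.card.succPNat ≤ a := by
    have := card_le_card fun x hx => mem_Ico.2 ⟨one_le, hlt x hx⟩
    rw [PNat.card_Ico, PNat.one_coe] at this
    rw [← PNat.coe_le_coe, Nat.succPNat_coe]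
    have := a.pos
    omega
  rw [sum_insert haK, card_insert_of_notMem haK, sum_range_succ, add_comm]
  exact add_le_add ih (hf hcard)

lemma sum_glb_le_topk {p : α → ℝ≥0∞} (hp : p ∈ S) (hp1 : IsPMF p) (K : Finset ℕ+) :
    ∑ i ∈ K, glb S i ≤ topk p K.card :=
  calc ∑ i ∈ K, glb S i ≤ ∑ n ∈ range K.card, glb S n.succPNat :=
        sum_le_sum_range_succPNat_of_antitone (glb_antitone hp hp1) K
    _ = infTopk S K.card := sum_range_glb ⟨p, hp⟩ _
    _ ≤ topk p K.card := infTopk_le hp _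

lemma isPMF_glb (hS : S.Nonempty) (hex : GlbExists S) : IsPMF (glb S) := by
  rw [IsPMF, ← Equiv.pnatEquivNat.symm.tsum_eq, Equiv.pnatEquivNat_symm_apply,
    ENNReal.tsum_eq_iSup_nat]
  simp only [sum_range_glb hS]
  exact tendsto_nhds_unique (tendsto_atTop_iSup (infTopk_mono S)) hex

end Glb

section Dyadic

lemma tsum_geomHalf : ∑' z, geomHalf z = 1 := by
  rw [← Equiv.pnatEquivNat.symm.tsum_eq, Equiv.pnatEquivNat_symm_apply]
  simp only [geomHalf, Nat.succPNat_coe, pow_succ, ENNReal.tsum_mul_right, ENNReal.tsum_geometric,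
    ENNReal.one_sub_inv_two, inv_inv]
  exact ENNReal.mul_inv_cancel two_ne_zero ENNReal.ofNat_ne_top

lemma tsum_prodFun {β γ : Type*} (q : β → ℝ≥0∞) (r : γ → ℝ≥0∞) :
    ∑' x, prodFun q r x = (∑' a, q a) * ∑' b, r b := by
  rw [← ENNReal.tsum_mul_right]
  simp only [← ENNReal.tsum_mul_left]
  exact ENNReal.tsum_prod (f := fun a b => q a * r b)

lemma sum_Icc_inv_two_pow_add (m : ℕ) : ∑ n ∈ Icc 1 m, (2⁻¹ : ℝ≥0∞) ^ n + 2⁻¹ ^ m = 1 := by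
  induction m with
  | zero => simp
  | succ m ih =>
    rw [sum_Icc_succ_top (by omega), add_assoc, ← two_mul, pow_succ, mul_comm, mul_assoc,
      ENNReal.inv_mul_cancel two_ne_zero ENNReal.ofNat_ne_top, mul_one, ih]

lemma sum_geomHalf_add_le {Z : Finset ℕ+} {M : ℕ+} (hZ : ∀ z ∈ Z, z ≤ M) :
    ∑ z ∈ Z, geomHalf z + geomHalf M ≤ 1 :=
  calc ∑ z ∈ Z, geomHalf z + geomHalf M
        = ∑ n ∈ Z.map ⟨(↑), PNat.coe_injective⟩, (2⁻¹ : ℝ≥0∞) ^ n + 2⁻¹ ^ (M : ℕ) := by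
        rw [sum_map]
        rfl
    _ ≤ ∑ n ∈ Icc 1 (M : ℕ), (2⁻¹ : ℝ≥0∞) ^ n + 2⁻¹ ^ (M : ℕ) := by
        gcongr
        intro n hn
        obtain ⟨z, hz, rfl⟩ := mem_map.1 hn
        exact mem_Icc.2 ⟨z.pos, hZ z hz⟩
    _ = 1 := sum_Icc_inv_two_pow_add M

lemma sum_mul_geomHalf_add_le {Z : Finset ℕ+} (hZ : Z.Nonempty) {c s : ℝ≥0∞}
    (hs : ∀ z ∈ Z, s ≤ c * geomHalf z) : ∑ z ∈ Z, c * geomHalf z + s ≤ c :=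
  calc ∑ z ∈ Z, c * geomHalf z + s ≤ ∑ z ∈ Z, c * geomHalf z + c * geomHalf (Z.max' hZ) := by
        gcongr
        exact hs _ (Z.max'_mem hZ)
    _ = c * (∑ z ∈ Z, geomHalf z + geomHalf (Z.max' hZ)) := by rw [mul_add, mul_sum]
    _ ≤ c * 1 := by
        gcongr
        exact sum_geomHalf_add_le fun z hz => Z.le_max' z hz
    _ = c := mul_one c

lemma sum_prodFun_add_card_mul_le (q : ℕ+ → ℝ≥0∞) {L : Finset (ℕ+ × ℕ+)} {s : ℝ≥0∞}
    (hL : ∀ x ∈ L, s ≤ prodFun q geomHalf x) :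
    ∑ x ∈ L, prodFun q geomHalf x + (L.image Prod.fst).card * s ≤
      ∑ i ∈ L.image Prod.fst, q i := by
  set R : ℕ+ → Finset ℕ+ := fun i => (L.filter (·.1 = i)).image Prod.snd
  have hmem : ∀ x, x ∈ L ↔ x.1 ∈ L.image Prod.fst ∧ x.2 ∈ R x.1 := fun x => by
    simp only [R, mem_image, mem_filter]
    refine ⟨fun hx => ⟨⟨x, hx, rfl⟩, x, ⟨hx, rfl⟩, rfl⟩, ?_⟩
    rintro ⟨-, y, ⟨hy, hy1⟩, hy2⟩
    rwa [← Prod.ext hy1 hy2]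
  rw [sum_finset_product L _ R hmem, ← nsmul_eq_mul, ← sum_const, ← sum_add_distrib]
  refine sum_le_sum fun i hi =>
    sum_mul_geomHalf_add_le ?_ fun z hz => hL (i, z) ((hmem _).2 ⟨hi, hz⟩)
  obtain ⟨x, hx, rfl⟩ := mem_image.1 hi
  exact ⟨x.2, mem_image_of_mem _ (mem_filter.2 ⟨hx, rfl⟩)⟩

end Dyadic

section Enumeration

variable {β : Type*} {f : β → ℝ≥0∞}

lemma exists_max_notMem (hf : ∑' x, f x ≠ ∞) (hinf : (support f).Infinite) (A : Finset β) :
    ∃ m ∉ A, f m ≠ 0 ∧ ∀ x ∉ A, f x ≤ f m := by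
  obtain ⟨x₀, hx₀, hx₀A⟩ := hinf.exists_notMem_finset A
  have hfin : {x | f x₀ ≤ f x ∧ x ∉ A}.Finite :=
    (ENNReal.finite_const_le_of_tsum_ne_top hf hx₀).subset fun x hx => hx.1
  obtain ⟨m, ⟨hm₀, hmA⟩, hmax⟩ := Set.exists_max_image _ f hfin ⟨x₀, le_rfl, hx₀A⟩
  refine ⟨m, hmA, ne_bot_of_le_ne_bot hx₀ hm₀, fun x hxA => ?_⟩
  by_cases hx : f x₀ ≤ f x
  · exact hmax x ⟨hx, hxA⟩
  · exact (not_le.1 hx).le.trans hm₀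

lemma exists_antitone_enumeration (hf : ∑' x, f x ≠ ∞) (hinf : (support f).Infinite) :
    ∃ σ : ℕ → β, Injective σ ∧ Antitone (f ∘ σ) ∧ Set.range σ = support f := by
  choose pick hpick_notMem hpick_ne hpick_max using exists_max_notMem hf hinf
  let chosen : ℕ → Finset β := fun t => Nat.rec ∅ (fun _ A => insert (pick A) A) t
  let σ : ℕ → β := fun t => pick (chosen t)
  have hchosen : ∀ t, chosen t = (range t).image σ := by
    intro t
    induction t with
    | zero => rfl
    | succ t ih => rw [range_add_one, image_insert, ← ih]
  have hinj : Injective σ := Injective.of_lt_imp_ne fun s t hst h => by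
    have hs : σ s ∈ chosen t := hchosen t ▸ mem_image_of_mem σ (mem_range.2 hst)
    rw [h] at hs
    exact hpick_notMem (chosen t) hs
  refine ⟨σ, hinj, antitone_nat_of_succ_le fun t => hpick_max _ _ fun h =>
    hpick_notMem (chosen (t + 1)) (mem_insert_of_mem h), ?_⟩
  refine (Set.range_subset_iff.2 fun t => hpick_ne _).antisymm fun x hx => ?_
  by_contra hxσ
  have hσ_le : Set.range σ ⊆ {y | f x ≤ f y} := Set.range_subset_iff.2 fun t =>
    hpick_max _ x fun h => hxσ <| by
      obtain ⟨s, -, rfl⟩ := mem_image.1 (hchosen t ▸ h)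
      exact Set.mem_range_self s
  exact Set.infinite_range_of_injective hinj
    ((ENNReal.finite_const_le_of_tsum_ne_top hf hx).subset hσ_le)

end Enumeration

section Greedy

variable {α : Type*} [Nonempty α] (w : ℕ → ℝ≥0∞) (p : α → ℝ≥0∞)

/-- Bin loads after greedily packing `w 0, …, w (t - 1)`; a piece that fits nowhere goes to an
arbitrary bin. -/
noncomputable def greedyLoad : ℕ → α → ℝ≥0∞
  | 0 => 0
  | t + 1 =>
    greedyLoad t + Pi.single (Classical.epsilon fun y => greedyLoad t y + w t ≤ p y) (w t)

noncomputable def greedyBin (t : ℕ) : α :=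
  Classical.epsilon fun y => greedyLoad w p t y + w t ≤ p y

lemma greedyLoad_succ (t : ℕ) :
    greedyLoad w p (t + 1) = greedyLoad w p t + Pi.single (greedyBin w p t) (w t) := rfl

lemma greedyLoad_apply (t : ℕ) (y : α) :
    greedyLoad w p t y = ∑ t' ∈ range t, if greedyBin w p t' = y then w t' else 0 := by
  induction t with
  | zero => rfl
  | succ t ih =>
    simp only [greedyLoad_succ, Pi.add_apply, ih, sum_range_succ, Pi.single_apply, eq_comm]

lemma tsum_greedyLoad (t : ℕ) : ∑' y, greedyLoad w p t y = ∑ t' ∈ range t, w t' := by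
  induction t with
  | zero => simp [greedyLoad]
  | succ t ih =>
    simp only [greedyLoad_succ, Pi.add_apply, sum_range_succ, ← ih, ENNReal.tsum_add,
      tsum_pi_single]

variable {w p}

lemma greedyLoad_le
    (hfit : ∀ t (u : α → ℝ≥0∞), ∑' y, u y ≤ ∑ t' ∈ range t, w t' → ∃ y, u y + w t ≤ p y)
    (t : ℕ) (y : α) : greedyLoad w p t y ≤ p y := by
  induction t generalizing y with
  | zero => exact zero_le
  | succ t ih =>
    rw [greedyLoad_succ, Pi.add_apply, Pi.single_apply]
    split_ifs with hy
    · exact hy ▸ Classical.epsilon_spec (hfit t _ (tsum_greedyLoad w p t).le)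
    · exact (add_zero _).trans_le (ih y)

lemma tsum_ite_greedyBin_le
    (hfit : ∀ t (u : α → ℝ≥0∞), ∑' y, u y ≤ ∑ t' ∈ range t, w t' → ∃ y, u y + w t ≤ p y)
    (y : α) : ∑' t, (if greedyBin w p t = y then w t else 0) ≤ p y := by
  rw [ENNReal.tsum_eq_iSup_nat]
  exact iSup_le fun t => (greedyLoad_apply w p t y).symm.trans_le (greedyLoad_le hfit t y)

end Greedy

lemma agg_of_tsum_ite_le {α β : Type*} {π : β → ℝ≥0∞} {p : α → ℝ≥0∞} (g : β → α)
    (hg : ∀ y, ∑' x, (if g x = y then π x else 0) ≤ p y) (htot : ∑' x, π x = ∑' y, p y)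
    (hp : ∑' y, p y ≠ ∞) : Agg π p := by
  have hsum : ∑' y, ∑' x, (if g x = y then π x else 0) = ∑' y, p y := by
    rw [ENNReal.tsum_comm, ← htot]
    exact tsum_congr fun x => tsum_ite_eq' (g x) fun _ => π x
  have heq : ∀ y, ∑' x, (if g x = y then π x else 0) = p y := by
    by_contra! h
    obtain ⟨y, hy⟩ := h
    exact (ENNReal.tsum_lt_tsum (hsum ▸ hp) hg (lt_of_le_of_ne (hg y) hy)).ne hsum
  refine ⟨g, fun x hx => ?_, fun y => (heq y).symm⟩
  rw [← heq]
  refine ne_bot_of_le_ne_bot hx ?_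
  simpa using ENNReal.le_tsum (f := fun x' => if g x' = g x then π x' else 0) x

lemma exists_fit_of_sum_le_topk {α : Type*} {q : ℕ+ → ℝ≥0∞} {p : α → ℝ≥0∞}
    (hq : ∑' i, q i ≠ ∞) (hmaj : ∀ K : Finset ℕ+, ∑ i ∈ K, q i ≤ topk p K.card)
    {σ : ℕ → ℕ+ × ℕ+} (hσ : Injective σ) (hanti : Antitone (prodFun q geomHalf ∘ σ))
    (hpos : ∀ t, prodFun q geomHalf (σ t) ≠ 0) (t : ℕ) (u : α → ℝ≥0∞)
    (hu : ∑' y, u y ≤ ∑ t' ∈ range t, prodFun q geomHalf (σ t')) :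
    ∃ y, u y + prodFun q geomHalf (σ t) ≤ p y := by
  set π := prodFun q geomHalf
  set s := π (σ t)
  set C := ∑ t' ∈ range t, π (σ t')
  by_contra! hstuck
  set K := ((range (t + 1)).image σ).image Prod.fst
  have hrows : C + s + K.card * s ≤ ∑ i ∈ K, q i := by
    refine le_of_eq_of_le ?_ (sum_prodFun_add_card_mul_le q (s := s) fun x hx => ?_)
    · rw [sum_image fun _ _ _ _ h => hσ h, sum_range_succ]
    · obtain ⟨t', ht', rfl⟩ := mem_image.1 hx
      exact hanti (Nat.lt_succ_iff.1 (mem_range.1 ht'))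
  have hbins : ∑ i ∈ K, q i ≤ C + K.card * s := calc
    ∑ i ∈ K, q i ≤ topk p K.card := hmaj K
    _ ≤ ∑' y, u y + K.card * s := topk_le_tsum_add_mul p (fun y => (hstuck y).le) _
    _ ≤ C + K.card * s := by gcongr
  have hfin : C + K.card * s ≠ ∞ := ne_top_of_le_ne_top hq <| calc
    C + K.card * s ≤ C + s + K.card * s := by gcongr; exact le_self_add
    _ ≤ ∑' i, q i := hrows.trans (ENNReal.sum_le_tsum K)
  refine hpos t (nonpos_iff_eq_zero.1 (ENNReal.le_of_add_le_add_left hfin ?_))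
  rw [add_zero, add_right_comm]
  exact hrows.trans hbins

theorem agg_prodFun_geomHalf_of_sum_le_topk {α : Type*} {p : α → ℝ≥0∞} {q : ℕ+ → ℝ≥0∞}
    (hp : IsPMF p) (hq : IsPMF q) (hmaj : ∀ K : Finset ℕ+, ∑ i ∈ K, q i ≤ topk p K.card) :
    Agg (prodFun q geomHalf) p := by
  unfold IsPMF at hp hq
  have hπ : ∑' x, prodFun q geomHalf x = 1 := by rw [tsum_prodFun, hq, tsum_geomHalf, one_mul]
  obtain ⟨i, hi⟩ : ∃ i, q i ≠ 0 := by
    by_contra! h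
    simp [h] at hq
  have hinf : (support (prodFun q geomHalf)).Infinite :=
    Set.infinite_of_injective_forall_mem (Prod.mk_right_injective i) fun z =>
      mul_ne_zero hi (by simp [geomHalf])
  obtain ⟨σ, hσ, hanti, hrange⟩ := exists_antitone_enumeration (hπ ▸ ENNReal.one_ne_top) hinf
  have : Nonempty α := by
    rcases isEmpty_or_nonempty α with h | h
    · simp at hp
    · exact h
  have hfit := exists_fit_of_sum_le_topk (hq ▸ ENNReal.one_ne_top) hmaj hσ hanti
    fun t => hrange.le (Set.mem_range_self t)
  refine agg_of_tsum_ite_le (greedyBin (prodFun q geomHalf ∘ σ) p ∘ invFun σ) (fun y => ?_)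
    (hπ.trans hp.symm) (hp ▸ ENNReal.one_ne_top)
  rw [← hσ.tsum_eq]
  · simpa only [comp_apply, leftInverse_invFun hσ _] using
      tsum_ite_greedyBin_le (w := prodFun q geomHalf ∘ σ) hfit y
  · exact hrange ▸ support_subset_iff'.2 fun x hx => by simp [notMem_support.1 hx]

theorem glb_prod_geom_underlying_coupling_general {α : Type*}
    (S : Set (α → ℝ≥0∞)) (hS : ∀ p ∈ S, IsPMF p) (hex : GlbExists S) :
    ∀ p ∈ S, Agg (prodFun (glb S) geomHalf) p := fun p hp =>
  agg_prodFun_geomHalf_of_sum_le_topk (hS p hp) (isPMF_glb ⟨p, hp⟩ hex)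
    (sum_glb_le_topk hp (hS p hp))

/-- Corollary 2: if `⋀S` exists, then `(⋀S) × Geom_{1/2} ∈ Γ̃(S)`,
i.e. `(⋀S) × Geom_{1/2} ⊑ p` for every `p ∈ S`. -/
theorem glb_prod_geom_underlying_coupling {α : Type*} [Countable α]
    (S : Set (α → ℝ≥0∞)) (hS : ∀ p ∈ S, IsPMF p) (hex : GlbExists S) :
    ∀ p ∈ S, Agg (prodFun (glb S) geomHalf) p :=
  glb_prod_geom_underlying_coupling_general S hS hex

end MEC
end

section
/- Let q be a pmf on a countable set 𝒳, and let p, p_1, p_2, ... be pmfs on a countable set 𝒴 such that p(y) = lim_{i→∞} p_i(y) for every y ∈ 𝒴, and such that p_i is an aggregation of q (q ⊑ p_i) for every i ≥ 1. Then p is an aggregation of q (q ⊑ p). -/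
/-! Write `pᵢ` as the pushforward of `q` along `gᵢ`. Since the limit `p` still has total mass
one, no mass escapes to infinity: for `q x > 0` the points `gᵢ x`, which carry mass at least
`q x`, eventually lie in a fixed finite set. Along an ultrafilter refining `atTop` each such
sequence is therefore eventually constant, equal to some `G x`. Fatou's lemma gives
`G_* q ≤ p`, and both sides have total mass one, so `G_* q = p`. -/

open scoped ENNReal Classical
open Filter

namespace MEC

section Pushforward

variable {α β : Type*}

noncomputable def pushforward (g : α → β) (q : α → ℝ≥0∞) (y : β) : ℝ≥0∞ :=
  ∑' x, if g x = y then q x else 0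

theorem tsum_pushforward (g : α → β) (q : α → ℝ≥0∞) :
    ∑' y, pushforward g q y = ∑' x, q x := by
  simp only [pushforward]
  rw [ENNReal.tsum_comm]
  simp

theorem le_pushforward_apply (g : α → β) (q : α → ℝ≥0∞) (x : α) :
    q x ≤ pushforward g q (g x) := by
  simpa [pushforward] using ENNReal.le_tsum (f := fun x' => if g x' = g x then q x' else 0) x

theorem agg_iff_exists_pushforward_eq {q : α → ℝ≥0∞} {p : β → ℝ≥0∞} :
    Agg q p ↔ ∃ g : α → β, pushforward g q = p := by
  constructor
  · rintro ⟨g, -, hg⟩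
    exact ⟨g, funext fun y => (hg y).symm⟩
  · rintro ⟨g, rfl⟩
    exact ⟨g, fun x hx => (hx.bot_lt.trans_le (le_pushforward_apply g q x)).ne', fun _ => rfl⟩

end Pushforward

theorem _root_.Ultrafilter.exists_eventually_eq_of_eventually_mem {ι β : Type*}
    (U : Ultrafilter ι) {f : ι → β} {s : Set β} (hs : s.Finite) (h : ∀ᶠ i in U, f i ∈ s) :
    ∃ y ∈ s, ∀ᶠ i in U, f i = y := by
  have hU : (⋃ y ∈ s, {i | f i = y}) = {i | f i ∈ s} := by ext; simp
  exact (Ultrafilter.finite_biUnion_mem_iff hs).mp (hU ▸ h)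

theorem _root_.ENNReal.eq_of_le_of_tsum_eq {α : Type*} {f g : α → ℝ≥0∞} (hle : f ≤ g)
    (hg : ∑' x, g x ≠ ∞) (hsum : ∑' x, f x = ∑' x, g x) : f = g := by
  by_contra hne
  obtain ⟨x, hx⟩ := Function.ne_iff.mp hne
  exact (ENNReal.tsum_lt_tsum (hsum ▸ hg) hle ((hle x).lt_of_ne hx)).ne hsum

theorem exists_finset_eventually_lt_of_tendsto {ι β : Type*} {L : Filter ι}
    {f : ι → β → ℝ≥0∞} {p : β → ℝ≥0∞} (hp : ∑' y, p y = 1) (hf : ∀ i, ∑' y, f i y ≤ 1)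
    (hlim : ∀ y, Tendsto (f · y) L (nhds (p y))) {c : ℝ≥0∞} (hc : c ≠ 0) :
    ∃ F : Finset β, ∀ᶠ i in L, ∀ y ∉ F, f i y < c := by
  obtain ⟨F, hF⟩ : ∃ F : Finset β, 1 - c < ∑ y ∈ F, p y := by
    have h : 1 - c < ∑' y, p y := by
      rw [hp]
      exact ENNReal.sub_lt_self ENNReal.one_ne_top one_ne_zero hc
    rw [ENNReal.tsum_eq_iSup_sum] at h
    exact lt_iSup_iff.mp h
  have hFlim : Tendsto (fun i => ∑ y ∈ F, f i y) L (nhds (∑ y ∈ F, p y)) :=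
    tendsto_finsetSum _ fun y _ => hlim y
  refine ⟨F, (hFlim.eventually (Ioi_mem_nhds hF)).mono fun i hi y hy => ?_⟩
  by_contra! hcy
  have hsum : f i y + ∑ y ∈ F, f i y ≤ 1 := by
    rw [← Finset.sum_insert hy]
    exact (ENNReal.sum_le_tsum _).trans (hf i)
  have hfy : f i y ≠ ∞ := ne_top_of_le_ne_top ENNReal.one_ne_top (le_self_add.trans hsum)
  exact (Set.mem_Ioi.mp hi).not_ge
    ((ENNReal.le_sub_of_add_le_left hfy hsum).trans (tsub_le_tsub_left hcy 1))

theorem pushforward_le_of_tendsto {ι α β : Type*} {L : Filter ι} [L.NeBot]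
    {q : α → ℝ≥0∞} {p : β → ℝ≥0∞} {g : ι → α → β} {G : α → β}
    (hG : ∀ x, q x ≠ 0 → ∀ᶠ i in L, g i x = G x)
    (hlim : ∀ y, Tendsto (fun i => pushforward (g i) q y) L (nhds (p y))) :
    pushforward G q ≤ p := by
  intro y
  rw [pushforward, ENNReal.tsum_eq_iSup_sum]
  refine iSup_le fun S => ge_of_tendsto (hlim y) ?_
  have hS : ∀ᶠ i in L, ∀ x ∈ S, q x ≠ 0 → g i x = G x :=
    (eventually_all_finset S).2 fun x _ => eventually_imp_distrib_left.2 (hG x)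
  filter_upwards [hS] with i hi
  calc ∑ x ∈ S, (if G x = y then q x else 0)
      = ∑ x ∈ S, (if g i x = y then q x else 0) := by
        refine Finset.sum_congr rfl fun x hx => ?_
        by_cases hqx : q x = 0
        · simp [hqx]
        · rw [hi x hx hqx]
    _ ≤ pushforward (g i) q y := ENNReal.sum_le_tsum S

theorem agg_closed_under_pointwise_limit_general {α β : Type*}
    (q : α → ℝ≥0∞) (p : β → ℝ≥0∞) (pseq : ℕ → β → ℝ≥0∞)
    (hq : IsPMF q) (hp : IsPMF p)
    (hlim : ∀ y, Tendsto (fun i => pseq i y) atTop (nhds (p y)))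
    (hagg : ∀ i, Agg q (pseq i)) :
    Agg q p := by
  unfold IsPMF at hq hp
  choose g hg using fun i => agg_iff_exists_pushforward_eq.mp (hagg i)
  obtain rfl : pseq = fun i => pushforward (g i) q := funext fun i => (hg i).symm
  have htight : ∀ x, q x ≠ 0 → ∃ F : Finset β, ∀ᶠ i in atTop, g i x ∈ F := by
    intro x hx
    obtain ⟨F, hF⟩ := exists_finset_eventually_lt_of_tendsto hp
      (fun i => (tsum_pushforward (g i) q).trans_le hq.le) hlim hx
    exact ⟨F, hF.mono fun i hi => by_contra fun hx' =>
      (hi _ hx').not_ge (le_pushforward_apply (g i) q x)⟩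
  let U : Ultrafilter ℕ := Ultrafilter.of atTop
  have hlimit : ∀ x, ∃ y, q x ≠ 0 → ∀ᶠ i in U, g i x = y := by
    intro x
    by_cases hx : q x = 0
    · exact ⟨g 0 x, fun h => absurd hx h⟩
    obtain ⟨F, hF⟩ := htight x hx
    obtain ⟨y, -, hy⟩ :=
      U.exists_eventually_eq_of_eventually_mem F.finite_toSet (Ultrafilter.of_le _ hF)
    exact ⟨y, fun _ => hy⟩
  choose G hG using hlimit
  refine agg_iff_exists_pushforward_eq.mpr
    ⟨G, ENNReal.eq_of_le_of_tsum_eq ?_ (hp ▸ ENNReal.one_ne_top) ?_⟩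
  · exact pushforward_le_of_tendsto hG fun y => (hlim y).mono_left (Ultrafilter.of_le _)
  · rw [tsum_pushforward, hq, hp]

/-- Proposition 1: aggregation is closed under pointwise limits:
if `p(y) = lim_i pᵢ(y)` for every `y` and `q ⊑ pᵢ` for every `i`, then `q ⊑ p`. -/
theorem agg_closed_under_pointwise_limit {α β : Type*} [Countable α] [Countable β]
    (q : α → ℝ≥0∞) (p : β → ℝ≥0∞) (pseq : ℕ → β → ℝ≥0∞)
    (hq : IsPMF q) (hp : IsPMF p) (hpseq : ∀ i, IsPMF (pseq i))
    (hlim : ∀ y, Tendsto (fun i => pseq i y) atTop (nhds (p y)))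
    (hagg : ∀ i, Agg q (pseq i)) :
    Agg q p :=
  agg_closed_under_pointwise_limit_general q p pseq hq hp hlim hagg

end MEC
end

section
/- Let p and q be pmfs on [n] = {1,...,n} such that q ⪯ p, p(1) ≥ p(2) ≥ ⋯ ≥ p(n) and q(1) ≥ q(2) ≥ ⋯ ≥ q(n). Then there exist, for each x ∈ {2,...,n}, an index a_x ∈ {1,...,x−1} and a real number r_x with 0 ≤ r_x ≤ q(x), such that, setting r_1 = 0, for every x ∈ {1,...,n}: p(x) = q(x) − r_x + Σ_{y : a_y = x} r_y. -/
open scoped ENNReal Classical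
open Filter

namespace MEC

/-!
Induction on `n`, peeling off the last point `ℓ`. With `P k = ∑_{x<k} p x`, `Q k` likewise and
`D = P - Q`, the excess `d = q ℓ - p ℓ` equals `D ℓ ≥ 0`. Take the last `j < ℓ` with `D j ≤ d`,
alias `ℓ` to `j` with `r ℓ = d`, and subtract `d` from `p j`: the gap then drops by `d` only at
`k > j`, where `D k ≥ d`, so majorization survives; and `p j ≥ q j ≥ q ℓ ≥ d` because
`D (j + 1) ≥ d ≥ D j`.
-/

noncomputable def prefixSum {n : ℕ} (f : Fin n → ℝ) (k : ℕ) : ℝ :=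
  ∑ x ∈ Finset.univ.filter (fun x : Fin n => (x : ℕ) < k), f x

section prefixSum

variable {n : ℕ}

@[simp]
lemma prefixSum_zero (f : Fin n → ℝ) : prefixSum f 0 = 0 := by
  simp [prefixSum]

lemma prefixSum_of_le (f : Fin n → ℝ) {k : ℕ} (hk : n ≤ k) : prefixSum f k = ∑ x, f x := by
  rw [prefixSum, Finset.filter_true_of_mem fun x _ => x.isLt.trans_le hk]

lemma prefixSum_succ (f : Fin n → ℝ) {i : ℕ} (hi : i < n) :
    prefixSum f (i + 1) = prefixSum f i + f ⟨i, hi⟩ := by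
  have hset : Finset.univ.filter (fun x : Fin n => (x : ℕ) < i + 1)
      = insert ⟨i, hi⟩ (Finset.univ.filter fun x : Fin n => (x : ℕ) < i) := by
    ext x
    simp only [Finset.mem_filter, Finset.mem_insert, Finset.mem_univ, true_and, Fin.ext_iff]
    omega
  rw [prefixSum, hset, Finset.sum_insert (by simp), add_comm]
  rfl

lemma prefixSum_castSucc (f : Fin (n + 1) → ℝ) {k : ℕ} (hk : k ≤ n) :
    prefixSum (fun x : Fin n => f x.castSucc) k = prefixSum f k := by
  simp only [prefixSum, Finset.sum_filter, Fin.sum_univ_castSucc, Fin.val_castSucc,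
    Fin.val_last, if_neg hk.not_gt, add_zero]

lemma prefixSum_sub (f g : Fin n → ℝ) (k : ℕ) :
    prefixSum (f - g) k = prefixSum f k - prefixSum g k :=
  Finset.sum_sub_distrib _ _

lemma prefixSum_single (j : Fin n) (d : ℝ) (k : ℕ) :
    prefixSum (Pi.single j d) k = if (j : ℕ) < k then d else 0 := by
  simp [prefixSum, Pi.single_apply]

end prefixSum

lemma exists_lt_le_and_forall_Ioc_le {D : ℕ → ℝ} {d : ℝ} {m : ℕ} (hm : 0 < m)
    (h0 : D 0 ≤ d) (hdm : d ≤ D m) :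
    ∃ j < m, D j ≤ d ∧ ∀ k ∈ Set.Ioc j m, d ≤ D k := by
  obtain ⟨hjm, hj, hgt⟩ := Nat.findGreatest_eq_iff.1 (rfl : Nat.findGreatest (D · < d) m = _)
  set j := Nat.findGreatest (D · < d) m
  have hDj : D j ≤ d := by
    rcases eq_or_ne j 0 with h | h
    · rwa [h]
    · exact (hj h).le
  refine ⟨j, hjm.lt_of_ne fun h => ?_, hDj, fun k hk => not_lt.1 (hgt hk.1 hk.2)⟩
  exact (hj (h ▸ hm.ne')).not_ge (h ▸ hdm)

def IsAlias {n : ℕ} (p q : Fin n → ℝ) (a : Fin n → Fin n) (r : Fin n → ℝ) : Prop :=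
  (∀ x : Fin n, (x : ℕ) ≠ 0 → a x < x) ∧
  (∀ x : Fin n, (x : ℕ) = 0 → r x = 0) ∧
  (∀ x, 0 ≤ r x ∧ r x ≤ q x) ∧
  (∀ x, p x = q x - r x +
    ∑ y ∈ Finset.univ.filter (fun y : Fin n => (y : ℕ) ≠ 0 ∧ a y = x), r y)

lemma isAlias_self {n : ℕ} {q : Fin (n + 1) → ℝ} (hq : 0 ≤ q) : IsAlias q q 0 0 :=
  ⟨fun x hx => Fin.pos_iff_ne_zero.2 (Fin.val_ne_zero_iff.1 hx), fun _ _ => rfl,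
    fun x => ⟨le_rfl, hq x⟩, fun x => by simp⟩

lemma IsAlias.lastCases {n : ℕ} {p q : Fin (n + 1) → ℝ} {a : Fin n → Fin n} {r : Fin n → ℝ}
    {j : Fin n} {d : ℝ}
    (h : IsAlias ((fun x => p x.castSucc) - Pi.single j d) (fun x => q x.castSucc) a r)
    (hd : 0 ≤ d) (hdq : d ≤ q (Fin.last n)) (hlast : p (Fin.last n) = q (Fin.last n) - d) :
    IsAlias p q (Fin.lastCases j.castSucc fun x => (a x).castSucc) (Fin.lastCases d r) := by
  obtain ⟨ha, hr0, hr, hbal⟩ := h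
  have hn : n ≠ 0 := Nat.pos_iff_ne_zero.1 j.pos
  refine ⟨Fin.forall_fin_succ'.2 ⟨fun x => by simpa using ha x, by simp⟩,
    Fin.forall_fin_succ'.2 ⟨fun x => by simpa using hr0 x, fun h => absurd (by simpa using h) hn⟩,
    Fin.forall_fin_succ'.2 ⟨fun x => by simpa using hr x, by simpa using ⟨hd, hdq⟩⟩,
    Fin.forall_fin_succ'.2 ⟨fun x => ?_, ?_⟩⟩
  · have := hbal x
    simp only [Finset.sum_filter, Pi.sub_apply, Pi.single_apply, ne_eq] at this
    simp only [Finset.sum_filter, Fin.sum_univ_castSucc, Fin.lastCases_castSucc,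
      Fin.lastCases_last, Fin.val_last, Fin.val_castSucc, Fin.castSucc_inj, @eq_comm _ j, hn, ne_eq,
      not_false_eq_true, true_and]
    split_ifs at this ⊢ <;> linarith
  · simpa [Finset.sum_filter, Fin.sum_univ_castSucc, (Fin.castSucc_lt_last _).ne] using hlast

lemma prefixSum_sub_prefixSum_eq {n : ℕ} {p q : Fin (n + 1) → ℝ} (hsum : ∑ x, q x = ∑ x, p x) :
    prefixSum p n - prefixSum q n = q (Fin.last n) - p (Fin.last n) := by
  have hp := prefixSum_succ p n.lt_succ_self
  have hq := prefixSum_succ q n.lt_succ_self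
  rw [prefixSum_of_le _ le_rfl] at hp hq
  simp only [Fin.last] at hsum ⊢
  linarith

lemma exists_alias_target {n : ℕ} {p q : Fin (n + 1) → ℝ} (hn : 0 < n) (hp : 0 ≤ p)
    (hq : Antitone q) (hmaj : ∀ k ≤ n, prefixSum q k ≤ prefixSum p k)
    (hsum : ∑ x, q x = ∑ x, p x) :
    ∃ j : Fin n, q (Fin.last n) - p (Fin.last n) ≤ p j.castSucc ∧
      ∀ k ∈ Set.Ioc (j : ℕ) n,
        q (Fin.last n) - p (Fin.last n) ≤ prefixSum p k - prefixSum q k := by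
  have hDn := prefixSum_sub_prefixSum_eq hsum
  obtain ⟨j, hjn, hDj, hge⟩ :=
    exists_lt_le_and_forall_Ioc_le (D := fun k => prefixSum p k - prefixSum q k) hn
      (by simpa [← hDn] using hmaj n le_rfl) hDn.ge
  refine ⟨⟨j, hjn⟩, ?_, hge⟩
  have hstep := hge (j + 1) ⟨j.lt_succ_self, hjn⟩
  rw [prefixSum_succ p (by omega), prefixSum_succ q (by omega)] at hstep
  have hqj : q (Fin.last n) ≤ q ⟨j, by omega⟩ := hq (Fin.le_last _)
  have hpl : 0 ≤ p (Fin.last n) := hp _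
  show _ ≤ p ⟨j, by omega⟩
  linarith

theorem exists_isAlias : ∀ {n : ℕ} {p q : Fin n → ℝ}, 0 ≤ p → 0 ≤ q → Antitone q →
    (∀ k ≤ n, prefixSum q k ≤ prefixSum p k) → ∑ x, q x = ∑ x, p x → ∃ a r, IsAlias p q a r
  | 0, _, _, _, _, _, _, _ => ⟨isEmptyElim, isEmptyElim, isEmptyElim, isEmptyElim, isEmptyElim,
      isEmptyElim⟩
  | 1, p, q, _, hq, _, _, hsum => by
    obtain rfl : p = q := funext fun x => by simpa [Subsingleton.elim x 0] using hsum.symm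
    exact ⟨0, 0, isAlias_self hq⟩
  | n + 2, p, q, hp, hq, hanti, hmaj, hsum => by
    obtain ⟨j, hdj, hge⟩ :=
      exists_alias_target (by omega) hp hanti (fun k hk => hmaj k (by omega)) hsum
    set d := q (Fin.last (n + 1)) - p (Fin.last (n + 1))
    have hDn : prefixSum p (n + 1) - prefixSum q (n + 1) = d := prefixSum_sub_prefixSum_eq hsum
    have hd : 0 ≤ d := by linarith [hmaj (n + 1) (by omega)]
    set p' : Fin (n + 1) → ℝ := (fun x => p x.castSucc) - Pi.single j d
    have hreduce : ∀ k ≤ n + 1, prefixSum p' k =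
        prefixSum p k - if (j : ℕ) < k then d else 0 := fun k hk => by
      rw [prefixSum_sub, prefixSum_castSucc p hk, prefixSum_single]
    have hp' : 0 ≤ p' := fun x => by
      rcases eq_or_ne x j with rfl | hx
      · simpa [p'] using hdj
      · simpa [p', hx] using hp x.castSucc
    have hmaj' : ∀ k ≤ n + 1, prefixSum (fun x : Fin (n + 1) => q x.castSucc) k ≤
        prefixSum p' k := fun k hk => by
      rw [hreduce k hk, prefixSum_castSucc q hk]
      split_ifs with hjk
      · linarith [hge k ⟨hjk, hk⟩]
      · linarith [hmaj k (by omega)]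
    have hsum' : ∑ x : Fin (n + 1), q x.castSucc = ∑ x, p' x := by
      rw [← prefixSum_of_le _ le_rfl, ← prefixSum_of_le _ le_rfl, hreduce _ le_rfl,
        prefixSum_castSucc q le_rfl, if_pos j.isLt]
      linarith
    obtain ⟨a, r, h⟩ := exists_isAlias hp' (fun x : Fin (n + 1) => hq x.castSucc)
      (hanti.comp_monotone Fin.strictMono_castSucc.monotone) hmaj' hsum'
    exact ⟨_, _, h.lastCases hd (sub_le_self _ (hp _)) (by ring)⟩

/-- Points of `[n]` are indexed by `Fin n`, so index `0` plays the role of `1 ∈ [n]`. -/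
theorem majorized_alias_general (n : ℕ) (p q : Fin n → ℝ)
    (hp0 : ∀ x, 0 ≤ p x) (hq0 : ∀ x, 0 ≤ q x)
    (hp1 : ∑ x, p x = 1) (hq1 : ∑ x, q x = 1)
    (hqsort : ∀ x y : Fin n, x ≤ y → q y ≤ q x)
    (hmaj : ∀ k : ℕ,
      ∑ x ∈ Finset.univ.filter (fun x : Fin n => (x : ℕ) < k), q x ≤
        ∑ x ∈ Finset.univ.filter (fun x : Fin n => (x : ℕ) < k), p x) :
    ∃ (a : Fin n → Fin n) (r : Fin n → ℝ),
      (∀ x : Fin n, (x : ℕ) ≠ 0 → a x < x) ∧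
      (∀ x : Fin n, (x : ℕ) = 0 → r x = 0) ∧
      (∀ x, 0 ≤ r x ∧ r x ≤ q x) ∧
      (∀ x, p x = q x - r x +
        ∑ y ∈ Finset.univ.filter (fun y : Fin n => (y : ℕ) ≠ 0 ∧ a y = x), r y) :=
  exists_isAlias hp0 hq0 hqsort (fun k _ => hmaj k) (hq1.trans hp1.symm)

/-- Lemma 1, majorized alias: for pmfs `p, q` on `[n]` (indexed here by
`Fin n`, so index `0` plays the role of `1 ∈ [n]`) sorted in descending order with `q ⪯ p`,
there exist `a_x < x` and `0 ≤ r_x ≤ q(x)` for `x ≠ 0`, with `r` vanishing at the first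
index, such that `p(x) = q(x) − r_x + Σ_{y : a_y = x} r_y` for every `x`. -/
theorem majorized_alias (n : ℕ) (p q : Fin n → ℝ)
    (hp0 : ∀ x, 0 ≤ p x) (hq0 : ∀ x, 0 ≤ q x)
    (hp1 : ∑ x, p x = 1) (hq1 : ∑ x, q x = 1)
    (hpsort : ∀ x y : Fin n, x ≤ y → p y ≤ p x)
    (hqsort : ∀ x y : Fin n, x ≤ y → q y ≤ q x)
    (hmaj : ∀ k : ℕ,
      ∑ x ∈ Finset.univ.filter (fun x : Fin n => (x : ℕ) < k), q x ≤
        ∑ x ∈ Finset.univ.filter (fun x : Fin n => (x : ℕ) < k), p x) :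
    ∃ (a : Fin n → Fin n) (r : Fin n → ℝ),
      (∀ x : Fin n, (x : ℕ) ≠ 0 → a x < x) ∧
      (∀ x : Fin n, (x : ℕ) = 0 → r x = 0) ∧
      (∀ x, 0 ≤ r x ∧ r x ≤ q x) ∧
      (∀ x, p x = q x - r x +
        ∑ y ∈ Finset.univ.filter (fun y : Fin n => (y : ℕ) ≠ 0 ∧ a y = x), r y) :=
  majorized_alias_general n p q hp0 hq0 hp1 hq1 hqsort hmaj

end MEC
end

section
/- Let p and q be pmfs on [n] = {1,...,n} sorted in descending order (p(1) ≥ ⋯ ≥ p(n), q(1) ≥ ⋯ ≥ q(n)) such that q ⪯ p. Then there exists an n×n lower triangular right stochastic matrix M, in which each row has at most one positive off-diagonal entry, such that the probability row vectors satisfy p⃗ = q⃗ M. -/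
open scoped ENNReal Classical
open Filter

namespace MEC

/-!
The alias method, by induction on `n`. Majorization and equal totals force the last atom to have an
excess `e = q n - p n ≥ 0`. Row `n` keeps the fraction `p n / q n` of its mass on the diagonal and
sends the rest, `e / q n`, to one column `j < n`, chosen so that `p - e • δ_j` is still
nonnegative and still majorizes `q` on the first `n` atoms; the induction hypothesis applied to
`q` and `p - e • δ_j` supplies the other rows.
-/

open Finset

/-- Indices are natural numbers and only rows `i < n` are constrained, so that a matrix for the
first `n` atoms extends to one for the first `n + 1` atoms by adding a row. -/
structure IsAliasMatrix (n : ℕ) (q p : ℕ → ℝ) (M : ℕ → ℕ → ℝ) : Prop where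
  nonneg : ∀ i < n, ∀ k, 0 ≤ M i k
  eq_zero_of_lt : ∀ i < n, ∀ k, i < k → M i k = 0
  sum_row : ∀ i < n, ∑ k ∈ range n, M i k = 1
  eq_of_pos_of_ne : ∀ i < n, ∀ k l, k ≠ i → l ≠ i → 0 < M i k → 0 < M i l → k = l
  sum_col : ∀ k < n, ∑ i ∈ range n, q i * M i k = p k

theorem IsAliasMatrix.extend {n j : ℕ} {q p : ℕ → ℝ} {M : ℕ → ℕ → ℝ} {b : ℝ}
    (hM : IsAliasMatrix n q (p - Pi.single j (q n * b)) M) (hj : j < n ∨ b = 0)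
    (hb0 : 0 ≤ b) (hb1 : b ≤ 1) (hpn : q n * (1 - b) = p n) :
    IsAliasMatrix (n + 1) q p
      (Function.update M n (Pi.single n (1 - b) + Pi.single j b)) := by
  set r : ℕ → ℝ := Pi.single n (1 - b) + Pi.single j b
  have hr : ∀ k, k ≠ n → r k = (Pi.single j b : ℕ → ℝ) k := fun k hk => by simp [r, hk]
  have hrj : ∀ k, k ≠ n → 0 < r k → k = j := fun k hk hpos => by
    by_contra hkj
    simp [hr k hk, hkj] at hpos
  have hMn : ∀ i < n, M i n = 0 := fun i hi => hM.eq_zero_of_lt i hi n hi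
  constructor
  · intro i hi k
    rcases Nat.lt_succ_iff_lt_or_eq.1 hi with hi | rfl
    · simpa [hi.ne] using hM.nonneg i hi k
    · simp only [Function.update_self, r, Pi.add_apply, Pi.single_apply]
      split_ifs <;> linarith
  · intro i hi k hik
    rcases Nat.lt_succ_iff_lt_or_eq.1 hi with hi | rfl
    · simpa [hi.ne] using hM.eq_zero_of_lt i hi k hik
    · rcases hj with hj | rfl
      · simp [r, hik.ne', (hj.trans hik).ne']
      · simp [r, hik.ne']
  · intro i hi
    rcases Nat.lt_succ_iff_lt_or_eq.1 hi with hi | rfl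
    · simpa [sum_range_succ, hi.ne, hMn i hi] using hM.sum_row i hi
    · rcases hj with hj | rfl
      · simp [r, sum_add_distrib, hj.trans (Nat.lt_succ_self i)]
      · simp [r]
  · intro i hi k l hk hl hpk hpl
    rcases Nat.lt_succ_iff_lt_or_eq.1 hi with hi | rfl
    · simp only [Function.update_of_ne hi.ne] at hpk hpl
      exact hM.eq_of_pos_of_ne i hi k l hk hl hpk hpl
    · rw [Function.update_self] at hpk hpl
      exact (hrj k hk hpk).trans (hrj l hl hpl).symm
  · intro k hk
    rw [sum_range_succ, Function.update_self]
    rcases Nat.lt_succ_iff_lt_or_eq.1 hk with hk | rfl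
    · have := hM.sum_col k hk
      rw [sum_congr rfl fun i hi => by rw [Function.update_of_ne (mem_range.1 hi).ne], this,
        hr k hk.ne]
      simp only [Pi.sub_apply, Pi.single_apply]
      split_ifs <;> ring
    · rw [sum_congr rfl fun i hi => by rw [Function.update_of_ne (mem_range.1 hi).ne,
        hMn i (mem_range.1 hi), mul_zero]]
      rcases hj with hj | rfl
      · simp [r, ← hpn, hj.ne']
      · simp [r, ← hpn]

structure PrefixMajorized (n : ℕ) (q p : ℕ → ℝ) : Prop where
  sum_le : ∀ k ≤ n, ∑ x ∈ range k, q x ≤ ∑ x ∈ range k, p x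
  sum_eq : ∑ x ∈ range n, q x = ∑ x ∈ range n, p x

theorem PrefixMajorized.last_le {n : ℕ} {q p : ℕ → ℝ} (h : PrefixMajorized (n + 1) q p) :
    p n ≤ q n := by
  have := h.sum_eq
  rw [sum_range_succ, sum_range_succ] at this
  linarith [h.sum_le n n.le_succ]

theorem PrefixMajorized.sub_single {n j : ℕ} {q p : ℕ → ℝ} {e : ℝ}
    (hle : ∀ k ≤ n, ∑ x ∈ range k, q x ≤ ∑ x ∈ range k, p x)
    (hge : ∀ k, j < k → k ≤ n → ∑ x ∈ range k, q x + e ≤ ∑ x ∈ range k, p x)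
    (heq : ∑ x ∈ range n, q x + e = ∑ x ∈ range n, p x) (hje : j < n ∨ e = 0) :
    PrefixMajorized n q (p - Pi.single j e) := by
  have hsum (k : ℕ) : ∑ x ∈ range k, (p - Pi.single j e : ℕ → ℝ) x =
      ∑ x ∈ range k, p x - if j < k then e else 0 := by
    simp [sum_sub_distrib, sum_pi_single']
  refine ⟨fun k hk => ?_, ?_⟩
  · rw [hsum]
    split_ifs with hjk
    · linarith [hge k hjk hk]
    · simpa using hle k hk
  · rcases hje with hj | rfl
    · rw [hsum, if_pos hj]
      linarith
    · simpa using heq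

/-- The excess `e = q n - p n` is taken from column `j`, the last index whose prefix surplus
`D j = ∑_{x<j} (p x - q x)` is below `e`: the surplus stays at least `e` after `j`, and `p j ≥ e`
since `p j - q j = D (j+1) - D j > 0` and `q j ≥ q n ≥ e`. -/
theorem PrefixMajorized.exists_pivot {n : ℕ} {q p : ℕ → ℝ} (h : PrefixMajorized (n + 1) q p)
    (hp : ∀ x < n + 1, 0 ≤ p x) (hq : AntitoneOn q (Set.Iio (n + 1))) :
    ∃ j, (j < n ∨ q n - p n = 0) ∧ (∀ x < n, 0 ≤ (p - Pi.single j (q n - p n) : ℕ → ℝ) x) ∧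
      PrefixMajorized n q (p - Pi.single j (q n - p n)) := by
  set e := q n - p n
  set D : ℕ → ℝ := fun k => ∑ x ∈ range k, p x - ∑ x ∈ range k, q x
  obtain ⟨j, hjn, hj0, hjmax⟩ : ∃ j ≤ n, (D 0 < e → D j < e) ∧ ∀ k, j < k → k ≤ n → ¬ D k < e :=
    ⟨Nat.findGreatest (D · < e) n, Nat.findGreatest_le n,
      fun h0 => Nat.findGreatest_spec (P := (D · < e)) (Nat.zero_le n) h0,
      fun _ hk hkn => Nat.findGreatest_is_greatest hk hkn⟩
  have hDn : D n = e := by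
    have := h.sum_eq
    simp only [sum_range_succ] at this
    simp only [D, e]
    linarith
  have he0 : 0 ≤ e := sub_nonneg.2 h.last_le
  have hjlt : 0 < e → j < n := fun he =>
    lt_of_le_of_ne hjn fun hjn => (hj0 (by simpa [D] using he)).ne (hjn ▸ hDn)
  have hpj : 0 < e → e ≤ p j := fun he => by
    have hDj := hj0 (by simpa [D] using he)
    have hDj1 := not_lt.1 (hjmax (j + 1) j.lt_succ_self (hjlt he))
    have hqj : q n ≤ q j := hq (by simp; omega) (by simp) hjn
    simp only [D, sum_range_succ] at hDj hDj1
    linarith [hp n n.lt_succ_self]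
  have hje : j < n ∨ e = 0 := by
    rcases he0.eq_or_lt with he | he
    · exact Or.inr he.symm
    · exact Or.inl (hjlt he)
  refine ⟨j, hje, fun x hx => ?_, .sub_single (fun k hk => h.sum_le k (by omega))
    (fun k hjk hk => ?_) (by simp only [D] at hDn; linarith) hje⟩
  · by_cases hxj : x = j
    · subst hxj
      rcases he0.eq_or_lt with he | he
      · simpa [← he] using hp x (by omega)
      · simpa using hpj he
    · simpa [hxj] using hp x (by omega)
  · have := not_lt.1 (hjmax k hjk hk)
    simp only [D] at this
    linarith

theorem PrefixMajorized.exists_isAliasMatrix {n : ℕ} {q p : ℕ → ℝ} (h : PrefixMajorized n q p)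
    (hp : ∀ x < n, 0 ≤ p x) (hq : AntitoneOn q (Set.Iio n)) :
    ∃ M, IsAliasMatrix n q p M := by
  induction n generalizing p with
  | zero => exact ⟨0, ⟨by simp, by simp, by simp, by simp, by simp⟩⟩
  | succ n ih =>
    obtain ⟨j, hj, hp', h'⟩ := h.exists_pivot hp hq
    obtain ⟨M, hM⟩ := ih h' hp' (hq.mono (Set.Iio_subset_Iio n.le_succ))
    set e := q n - p n
    have hpn := hp n n.lt_succ_self
    have hen : p n ≤ q n := h.last_le
    have hqb : q n * (e / q n) = e := by
      rcases eq_or_ne (q n) 0 with hqn | hqn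
      · simp only [e, hqn] at hen ⊢
        simp [show p n = 0 by linarith]
      · exact mul_div_cancel₀ e hqn
    rw [← hqb] at hM
    refine ⟨_, hM.extend ?_ (div_nonneg (by linarith) (by linarith))
      (div_le_one_of_le₀ (by linarith) (by linarith)) (by linarith [mul_sub (q n) 1 (e / q n)])⟩
    exact hj.imp_right fun he => by simp [he]

theorem sum_filter_val_lt_eq_sum_range {β : Type*} [AddCommMonoid β] {n k : ℕ} (hk : k ≤ n)
    (f : Fin n → β) :
    ∑ x ∈ univ.filter (fun x : Fin n => (x : ℕ) < k), f x =
      ∑ m ∈ range k, Function.extend Fin.val f 0 m := by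
  have hrange : (range n).filter (· < k) = range k := by
    ext m
    simp only [mem_filter, mem_range]
    omega
  rw [← hrange, sum_filter, sum_filter, ← Fin.sum_univ_eq_sum_range]
  simp only [Fin.val_injective.extend_apply]

theorem majorized_alias_matrix_general (n : ℕ) (p q : Fin n → ℝ)
    (hp0 : ∀ x, 0 ≤ p x)
    (hp1 : ∑ x, p x = 1) (hq1 : ∑ x, q x = 1)
    (hqsort : ∀ x y : Fin n, x ≤ y → q y ≤ q x)
    (hmaj : ∀ k : ℕ,
      ∑ x ∈ Finset.univ.filter (fun x : Fin n => (x : ℕ) < k), q x ≤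
        ∑ x ∈ Finset.univ.filter (fun x : Fin n => (x : ℕ) < k), p x) :
    ∃ M : Matrix (Fin n) (Fin n) ℝ,
      (∀ i j, 0 ≤ M i j) ∧
      (∀ i, ∑ j, M i j = 1) ∧
      (∀ i j : Fin n, i < j → M i j = 0) ∧
      (∀ i j k : Fin n, j ≠ i → k ≠ i → 0 < M i j → 0 < M i k → j = k) ∧
      (∀ j, ∑ i, q i * M i j = p j) := by
  set P := Function.extend Fin.val p 0
  set Q := Function.extend Fin.val q 0
  have hP (i : Fin n) : P i = p i := Fin.val_injective.extend_apply p 0 i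
  have hQ (i : Fin n) : Q i = q i := Fin.val_injective.extend_apply q 0 i
  have hmaj' : PrefixMajorized n Q P := by
    refine ⟨fun k hk => ?_, ?_⟩
    · simpa only [sum_filter_val_lt_eq_sum_range hk] using hmaj k
    · simp only [← Fin.sum_univ_eq_sum_range, hP, hQ, hp1, hq1]
  obtain ⟨M, hM⟩ := hmaj'.exists_isAliasMatrix (fun x hx => hP ⟨x, hx⟩ ▸ hp0 _)
    (fun a ha b hb hab => by simpa only [← hQ] using hqsort ⟨a, ha⟩ ⟨b, hb⟩ hab)
  refine ⟨Matrix.of fun i j => M i j, fun i j => hM.nonneg i i.2 j, fun i => ?_,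
    fun i j hij => hM.eq_zero_of_lt i i.2 j hij,
    fun i j k hj hk hpj hpk => Fin.ext (hM.eq_of_pos_of_ne i i.2 j k
      (Fin.val_injective.ne hj) (Fin.val_injective.ne hk) hpj hpk), fun j => ?_⟩
  · simpa only [Matrix.of_apply, Fin.sum_univ_eq_sum_range (M i)] using hM.sum_row i i.2
  · simpa only [Matrix.of_apply, ← hQ, ← hP, Fin.sum_univ_eq_sum_range (fun i => Q i * M i j)]
      using hM.sum_col j j.2

/-- Lemma 1 in matrix form: for pmfs `p, q` on `[n]` (indexed by `Fin n`)
sorted in descending order with `q ⪯ p`, there exists a lower triangular right stochastic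
matrix `M`, each of whose rows has at most one positive off-diagonal entry, with
`p⃗ = q⃗ M`. -/
theorem majorized_alias_matrix (n : ℕ) (p q : Fin n → ℝ)
    (hp0 : ∀ x, 0 ≤ p x) (hq0 : ∀ x, 0 ≤ q x)
    (hp1 : ∑ x, p x = 1) (hq1 : ∑ x, q x = 1)
    (hpsort : ∀ x y : Fin n, x ≤ y → p y ≤ p x)
    (hqsort : ∀ x y : Fin n, x ≤ y → q y ≤ q x)
    (hmaj : ∀ k : ℕ,
      ∑ x ∈ Finset.univ.filter (fun x : Fin n => (x : ℕ) < k), q x ≤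
        ∑ x ∈ Finset.univ.filter (fun x : Fin n => (x : ℕ) < k), p x) :
    ∃ M : Matrix (Fin n) (Fin n) ℝ,
      (∀ i j, 0 ≤ M i j) ∧
      (∀ i, ∑ j, M i j = 1) ∧
      (∀ i j : Fin n, i < j → M i j = 0) ∧
      (∀ i j k : Fin n, j ≠ i → k ≠ i → 0 < M i j → 0 < M i k → j = k) ∧
      (∀ j, ∑ i, q i * M i j = p j) :=
  majorized_alias_matrix_general n p q hp0 hp1 hq1 hqsort hmaj

end MEC
end

section
/- Let S = {p_1,...,p_m} be a finite set of m pmfs on {0,1}. Then there exists a pmf q with support size at most m+1 such that CGeom_{1/2,m+1} ⪯ q and every p_i is an aggregation of q (q ⊑ p_i for all i ∈ [m]). -/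
open scoped ENNReal Classical
open Filter

namespace MEC

/-! Write `t_p = p true`. Split off an atom of mass `1 - y`, where `y = max_p min (t_p, 1 - t_p)`
is at most `1 / 2`. Each `t_p` is then either a subset sum of the remaining mass `y`, or the atom
plus such a subset sum; in both cases the subset sum represents `min (t_p, 1 - t_p) ≤ y`. Recursing
on these folded values, where the maximiser can be dropped because `y` is the whole remaining mass,
yields `m + 1` atoms whose first `k` carry at least `1 - 2^{-k}` of the mass, which is what
majorizing `CGeom_{1/2, m+1}` amounts to. -/

open Finset

def seqCons {α : Type*} (a : α) (f : ℕ → α) : ℕ → α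
  | 0 => a
  | i + 1 => f i

theorem sum_range_succ_seqCons {M : Type*} [AddCommMonoid M] (c : M) (q : ℕ → M) (n : ℕ) :
    ∑ i ∈ range (n + 1), seqCons c q i = c + ∑ i ∈ range n, q i := by
  rw [sum_range_succ', add_comm]
  rfl

theorem sum_map_succ_seqCons {M : Type*} [AddCommMonoid M] (c : M) (q : ℕ → M) (T : Finset ℕ) :
    ∑ i ∈ T.map (addRightEmbedding 1), seqCons c q i = ∑ i ∈ T, q i :=
  sum_map _ _ _

theorem min_tsub_le_half {b x : ℝ≥0∞} (hx : x ≤ b) : min x (b - x) ≤ b / 2 := by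
  rw [ENNReal.le_div_iff_mul_le (Or.inl two_ne_zero) (Or.inl ENNReal.ofNat_ne_top), mul_two]
  calc min x (b - x) + min x (b - x) ≤ x + (b - x) :=
        add_le_add (min_le_left _ _) (min_le_right _ _)
    _ = b := add_tsub_cancel_of_le hx

theorem halving_seqCons {b y : ℝ≥0∞} {q : ℕ → ℝ≥0∞} (hy : y ≤ b / 2)
    (hq : ∀ k, y ≤ ∑ i ∈ range k, q i + y * 2⁻¹ ^ k) (k : ℕ) :
    b ≤ ∑ i ∈ range k, seqCons (b - y) q i + b * 2⁻¹ ^ k := by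
  cases k with
  | zero => simp
  | succ k =>
    have hyb : y ≤ b := hy.trans ENNReal.half_le_self
    have hpow : y * 2⁻¹ ^ k ≤ b * 2⁻¹ ^ (k + 1) := by
      rw [pow_succ', ← mul_assoc, ← div_eq_mul_inv]
      exact mul_le_mul_left hy _
    calc b = b - y + y := (tsub_add_cancel_of_le hyb).symm
      _ ≤ b - y + (∑ i ∈ range k, q i + b * 2⁻¹ ^ (k + 1)) :=
        add_le_add le_rfl ((hq k).trans (add_le_add le_rfl hpow))
      _ = _ := by rw [sum_range_succ_seqCons, add_assoc]

theorem exists_subset_sum_seqCons {n : ℕ} {b y x : ℝ≥0∞} {q : ℕ → ℝ≥0∞} (hb : b ≠ ∞)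
    (hyb : y ≤ b) (hx : x ≤ b) (hq : ∑ i ∈ range (n + 1), q i = y) {T : Finset ℕ}
    (hT : T ⊆ range (n + 1)) (hTx : ∑ i ∈ T, q i = min x (b - x)) :
    ∃ T ⊆ range (n + 2), ∑ i ∈ T, seqCons (b - y) q i = x := by
  rcases le_total x (b - x) with h | h
  · refine ⟨T.map (addRightEmbedding 1), fun i hi => ?_, ?_⟩
    · obtain ⟨j, hj, rfl⟩ := mem_map.1 hi
      simpa using mem_range.1 (hT hj)
    · rw [sum_map_succ_seqCons, hTx, min_eq_left h]
  · -- `x` is the atom `0` of mass `b - y` together with the complement of `T`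
    have hcompl : ∑ i ∈ range (n + 1) \ T, q i + (b - x) = y := by
      rw [← min_eq_right h, ← hTx, sum_sdiff hT, hq]
    refine ⟨insert 0 ((range (n + 1) \ T).map (addRightEmbedding 1)), fun i hi => ?_, ?_⟩
    · rcases mem_insert.1 hi with rfl | hi
      · simp
      · obtain ⟨j, hj, rfl⟩ := mem_map.1 hi
        simpa using mem_range.1 (sdiff_subset hj)
    · rw [sum_insert (by simp), sum_map_succ_seqCons,
        ← ENNReal.add_left_inj (ne_top_of_le_ne_top hb tsub_le_self), add_assoc, hcompl,
        seqCons, tsub_add_cancel_of_le hyb, add_tsub_cancel_of_le hx]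

theorem exists_halving_splitting (n : ℕ) {b : ℝ≥0∞} (hb : b ≠ ∞) {s : Finset ℝ≥0∞}
    (hs : #s ≤ n) (hsb : ∀ x ∈ s, x ≤ b) :
    ∃ q : ℕ → ℝ≥0∞, (∀ i, n < i → q i = 0) ∧ ∑ i ∈ range (n + 1), q i = b ∧
      (∀ k, b ≤ ∑ i ∈ range k, q i + b * 2⁻¹ ^ k) ∧
      ∀ x ∈ s, ∃ T ⊆ range (n + 1), ∑ i ∈ T, q i = x := by
  induction n generalizing b s with
  | zero =>
    refine ⟨seqCons (b - 0) 0, ?_, ?_, halving_seqCons zero_le (by simp), ?_⟩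
    · rintro (_ | i) hi
      exacts [absurd hi (lt_irrefl 0), rfl]
    · simp [seqCons]
    · simp [card_eq_zero.1 (Nat.le_zero.1 hs)]
  | succ n ih =>
    set y := s.sup fun x => min x (b - x)
    have hyhalf : y ≤ b / 2 := Finset.sup_le fun x hx => min_tsub_le_half (hsb x hx)
    have hyb : y ≤ b := hyhalf.trans ENNReal.half_le_self
    set s' := (s.image fun x => min x (b - x)).erase y
    have hs' : #s' ≤ n := by
      rcases s.eq_empty_or_nonempty with rfl | hne
      · simp [s']
      · obtain ⟨x, hx, hxy⟩ := exists_mem_eq_sup s hne fun x => min x (b - x)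
        rw [card_erase_of_mem (mem_image.2 ⟨x, hx, hxy.symm⟩)]
        have := card_image_le (s := s) (f := fun x => min x (b - x))
        omega
    obtain ⟨q, hq0, hqsum, hqhalf, hqrep⟩ := ih (ne_top_of_le_ne_top hb hyb) hs'
      fun z hz => by
        obtain ⟨x, hx, rfl⟩ := mem_image.1 (mem_of_mem_erase hz)
        exact le_sup (f := fun x => min x (b - x)) hx
    refine ⟨seqCons (b - y) q, ?_, ?_, halving_seqCons hyhalf hqhalf, fun x hx => ?_⟩
    · rintro (_ | i) hi
      exacts [absurd hi (Nat.not_lt_zero _), hq0 i (by omega)]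
    · rw [sum_range_succ_seqCons, hqsum, tsub_add_cancel_of_le hyb]
    · have hrep : ∃ T ⊆ range (n + 1), ∑ i ∈ T, q i = min x (b - x) := by
        by_cases hxy : min x (b - x) = y
        · exact ⟨range (n + 1), subset_rfl, hxy ▸ hqsum⟩
        · exact hqrep _ (mem_erase.2 ⟨hxy, mem_image.2 ⟨x, hx, rfl⟩⟩)
      obtain ⟨T, hT, hTx⟩ := hrep
      exact exists_subset_sum_seqCons hb hyb (hsb x hx) hqsum hT hTx

theorem sum_le_sum_range_card_of_antitone {M : Type*} [AddCommMonoid M] [PartialOrder M]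
    [IsOrderedAddMonoid M] {f : ℕ+ → M} (hf : Antitone f) (A : Finset ℕ+) :
    ∑ x ∈ A, f x ≤ ∑ i ∈ range #A, f i.succPNat := by
  induction A using Finset.induction_on_max with
  | empty => simp
  | insert a s hlt ih =>
    have ha : a ∉ s := fun h => lt_irrefl a (hlt a h)
    have hcard : #s + 1 ≤ a := by
      have : #s ≤ #(Ico 1 a) := card_le_card fun x hx => mem_Ico.2 ⟨one_le, hlt x hx⟩
      rw [PNat.card_Ico, PNat.one_coe] at this
      have := a.pos
      omega
    rw [sum_insert ha, card_insert_of_notMem ha, sum_range_succ, add_comm]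
    exact add_le_add ih (hf (by exact_mod_cast hcard))

theorem cgeomHalf_antitone (k : ℕ) : Antitone (cgeomHalf k) := by
  intro x y hxy
  have hxy' : (x : ℕ) ≤ y := hxy
  have h2 : (2⁻¹ : ℝ≥0∞) ≤ 1 := ENNReal.inv_le_one.2 one_le_two
  unfold cgeomHalf
  split_ifs <;>
    first
    | exact zero_le
    | exact le_rfl
    | exact pow_le_pow_right_of_le_one' h2 (by omega)
    | omega

theorem le_topk {α : Type*} (p : α → ℝ≥0∞) {k : ℕ} {A : Finset α} (hA : #A ≤ k) :
    ∑ x ∈ A, p x ≤ topk p k :=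
  le_iSup₂_of_le A hA le_rfl

theorem topk_le_sum_range_of_antitone {p : ℕ+ → ℝ≥0∞} (hp : Antitone p) (k : ℕ) :
    topk p k ≤ ∑ i ∈ range k, p i.succPNat :=
  iSup₂_le fun A hA => (sum_le_sum_range_card_of_antitone hp A).trans
    (sum_le_sum_of_subset (range_subset_range.2 hA))

theorem sum_range_cgeomHalf_add_pow {m k : ℕ} (hk : k ≤ m) :
    ∑ i ∈ range k, cgeomHalf (m + 1) i.succPNat + 2⁻¹ ^ k = 1 := by
  induction k with
  | zero => simp
  | succ k ih =>
    have hterm : cgeomHalf (m + 1) k.succPNat = 2⁻¹ ^ (k + 1) := by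
      simp [cgeomHalf, show k + 1 < m + 1 by omega]
    rw [sum_range_succ, hterm, add_assoc, ← two_mul, pow_succ', ← mul_assoc,
      ENNReal.mul_inv_cancel two_ne_zero ENNReal.ofNat_ne_top, one_mul, ih (by omega)]

theorem sum_range_cgeomHalf_eq_one {m k : ℕ} (hk : m < k) :
    ∑ i ∈ range k, cgeomHalf (m + 1) i.succPNat = 1 := by
  induction k, hk using Nat.le_induction with
  | base =>
    have hterm : cgeomHalf (m + 1) m.succPNat = 2⁻¹ ^ m := by simp [cgeomHalf]
    rw [sum_range_succ, hterm, sum_range_cgeomHalf_add_pow le_rfl]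
  | succ k hk ih =>
    have hterm : cgeomHalf (m + 1) k.succPNat = 0 := by
      simp [cgeomHalf, show ¬ k + 1 < m + 1 by omega, show k ≠ m by omega]
    rw [sum_range_succ, hterm, add_zero, ih]

theorem majorized_cgeomHalf_of_sum_range {m : ℕ} {q : ℕ → ℝ≥0∞}
    (htotal : ∑ i ∈ range (m + 1), q i = 1) (hhalving : ∀ k, 1 ≤ ∑ i ∈ range k, q i + 2⁻¹ ^ k) :
    Majorized (cgeomHalf (m + 1)) q := by
  intro k
  refine (topk_le_sum_range_of_antitone (cgeomHalf_antitone _) k).trans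
    (le_trans ?_ (le_topk q (card_range k).le))
  rcases le_or_gt k m with hk | hk
  · have hpow : (2⁻¹ : ℝ≥0∞) ^ k ≠ ∞ := ENNReal.pow_ne_top (by simp)
    rw [← ENNReal.add_le_add_iff_right hpow, sum_range_cgeomHalf_add_pow hk]
    exact hhalving k
  · rw [sum_range_cgeomHalf_eq_one hk, ← htotal]
    exact sum_le_sum_of_subset (range_subset_range.2 hk)

theorem agg_of_eq_tsum {α β : Type*} {q : α → ℝ≥0∞} {p : β → ℝ≥0∞} (g : α → β)
    (hg : ∀ y, p y = ∑' x, if g x = y then q x else 0) : Agg q p := by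
  refine ⟨g, fun x hx => ?_, hg⟩
  rw [hg]
  exact ne_bot_of_le_ne_bot hx (by simpa using ENNReal.le_tsum (f := fun x' =>
    if g x' = g x then q x' else 0) x)

theorem agg_bool_of_sum_eq {α : Type*} {q : α → ℝ≥0∞} {p : Bool → ℝ≥0∞} (hq : IsPMF q)
    (hp : IsPMF p) (T : Finset α) (hT : ∑ x ∈ T, q x = p true) : Agg q p := by
  have htrue : (∑' x, if decide (x ∈ T) = true then q x else 0) = p true := by
    rw [← hT, tsum_eq_sum (s := T) fun x hx => by simp [hx]]
    exact sum_congr rfl fun x hx => by simp [hx]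
  have hsum : (∑' x, if decide (x ∈ T) = true then q x else 0) +
      (∑' x, if decide (x ∈ T) = false then q x else 0) = p true + p false := by
    rw [← ENNReal.tsum_add, add_comm, ← tsum_bool, hp, ← hq]
    exact tsum_congr fun x => by by_cases hx : x ∈ T <;> simp [hx]
  have hfinite : p true ≠ ∞ := ne_top_of_le_ne_top ENNReal.one_ne_top
    (hp ▸ ENNReal.le_tsum true)
  have hfalse : (∑' x, if decide (x ∈ T) = false then q x else 0) = p false := by
    rwa [htrue, ENNReal.add_right_inj hfinite] at hsum
  refine agg_of_eq_tsum (fun x => decide (x ∈ T)) fun y => ?_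
  cases y
  · convert hfalse.symm
  · convert htrue.symm

/-- Lemma 2, Bernoulli splitting: for a set `S` of `m` pmfs on `{0,1}`,
there is a pmf `q` with support size at most `m + 1` such that `CGeom_{1/2,m+1} ⪯ q`
and `q ⊑ p` for every `p ∈ S`. -/
theorem bernoulli_splitting (m : ℕ) (S : Set (Bool → ℝ≥0∞))
    (hcard : S.encard = m) (hS : ∀ p ∈ S, IsPMF p) :
    ∃ q : ℕ → ℝ≥0∞, IsPMF q ∧ {x | q x ≠ 0}.encard ≤ (m : ℕ∞) + 1 ∧
      Majorized (cgeomHalf (m + 1)) q ∧ ∀ p ∈ S, Agg q p := by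
  have hfin : S.Finite := Set.finite_of_encard_eq_coe hcard
  have hs : #(hfin.toFinset.image fun p => p true) ≤ m := card_image_le.trans
    (by rw [← ENat.natCast_le_natCast, ← hfin.encard_eq_coe_toFinset_card, hcard])
  have hle : ∀ x ∈ hfin.toFinset.image fun p => p true, x ≤ 1 := by
    simp only [mem_image, Set.Finite.mem_toFinset]
    rintro _ ⟨p, hp, rfl⟩
    exact hS p hp ▸ ENNReal.le_tsum true
  obtain ⟨q, hq0, hqsum, hqhalf, hqrep⟩ := exists_halving_splitting m ENNReal.one_ne_top hs hle
  have hsupp : {x | q x ≠ 0} ⊆ range (m + 1) := fun i hi =>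
    mem_range.2 (Nat.lt_succ_of_le (not_lt.1 fun h => hi (hq0 i h)))
  have hpmf : IsPMF q := by
    rw [IsPMF, tsum_eq_sum fun i hi => not_not.1 fun h => hi (hsupp h), hqsum]
  refine ⟨q, hpmf, ?_, majorized_cgeomHalf_of_sum_range hqsum (by simpa using hqhalf),
    fun p hp => ?_⟩
  · calc {x | q x ≠ 0}.encard ≤ (range (m + 1) : Set ℕ).encard := Set.encard_mono hsupp
      _ = (m : ℕ∞) + 1 := by rw [Set.encard_coe_eq_coe_finsetCard, card_range]; rfl
  · obtain ⟨T, -, hT⟩ := hqrep (p true) (mem_image_of_mem _ (hfin.mem_toFinset.2 hp))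
    exact agg_bool_of_sum_eq hpmf (hS p hp) T hT

end MEC
end

section
/- Let q and p be pmfs on countable sets such that p is an aggregation of q (q ⊑ p). Then q is majorized by p (q ⪯ p). -/
open scoped ENNReal Classical
open Filter

namespace MEC

/-- aggregation implies majorization: if `q ⊑ p` then `q ⪯ p`. -/
theorem majorized_of_agg {α β : Type*} [Countable α] [Countable β]
    (q : α → ℝ≥0∞) (p : β → ℝ≥0∞) (hq : IsPMF q) (hp : IsPMF p)
    (hagg : Agg q p) : Majorized q p := by
  obtain ⟨g, -, hpg⟩ := hagg
  intro k
  apply iSup₂_le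
  intro A hA
  calc ∑ x ∈ A, q x
      = ∑ y ∈ A.image g, ∑ x ∈ A.filter (fun x => g x = y), q x :=
        (Finset.sum_fiberwise_of_maps_to (fun x hx => Finset.mem_image_of_mem g hx) q).symm
    _ ≤ ∑ y ∈ A.image g, p y := by
        refine Finset.sum_le_sum fun y _ => ?_
        rw [hpg y, Finset.sum_filter]
        exact ENNReal.sum_le_tsum A
    _ ≤ topk p k := by
        exact le_iSup₂ (f := fun (B : Finset β) (_ : B.card ≤ k) => ∑ x ∈ B, p x)
          (A.image g) (le_trans Finset.card_image_le hA)

end MEC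
end

section
/- Let p_1,...,p_m be pmfs on [n] with p_i(1) ≥ ⋯ ≥ p_i(n) for each i, and let q̄ = ⋀_{i∈[m]} p_i, assumed supported on [n]. Suppose for each i ∈ [m] and x ∈ {2,...,n} we are given a_{i,x} ∈ {1,...,x−1} and r_{i,x} ∈ [0, q̄(x)] (with r_{i,1} = 0) satisfying p_i(x) = q̄(x) − r_{i,x} + Σ_{x' : a_{i,x'}=x} r_{i,x'} for all x ∈ [n] and i ∈ [m]. Then for every x with 2 ≤ x ≤ n, there exists j ∈ [m] such that r_{j,x} = 0. -/
open scoped ENNReal Classical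
open Filter

namespace MEC

/-- Partial sum `Σ_{z=1}^{k} f(z)` of a vector indexed by `Fin n` (index `0` plays the
role of `1 ∈ [n]`). -/
def partialSum {n : ℕ} (f : Fin n → ℝ) (k : ℕ) : ℝ :=
  ∑ z ∈ Finset.univ.filter (fun z : Fin n => (z : ℕ) < k), f z

/-- let `p₁,…,pₘ` be pmfs on `[n]` (indexed by `Fin n`) sorted in
descending order, and `q̄ = ⋀ᵢ pᵢ` (supported on `[n]`, characterized by its partial sums
being the minimum of those of the `pᵢ`). Given alias data `a_{i,x} < x` and
`r_{i,x} ∈ [0, q̄(x)]` (with `r` vanishing at the first index) satisfying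
`pᵢ(x) = q̄(x) − r_{i,x} + Σ_{x' : a_{i,x'} = x} r_{i,x'}` for all `i, x`, every index
`x` other than the first admits some `j` with `r_{j,x} = 0`. -/
theorem exists_zero_residual (m n : ℕ) (p : Fin m → Fin n → ℝ) (qbar : Fin n → ℝ)
    (hp0 : ∀ i x, 0 ≤ p i x) (hp1 : ∀ i, ∑ x, p i x = 1)
    (hpsort : ∀ i, ∀ x y : Fin n, x ≤ y → p i y ≤ p i x)
    (hqbar0 : ∀ x, 0 ≤ qbar x) (hqbar1 : ∑ x, qbar x = 1)
    (hglb : ∀ k : ℕ, k ≤ n →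
      (∀ i, partialSum qbar k ≤ partialSum (p i) k) ∧
      (∃ i, partialSum qbar k = partialSum (p i) k))
    (a : Fin m → Fin n → Fin n) (r : Fin m → Fin n → ℝ)
    (ha : ∀ i (x : Fin n), (x : ℕ) ≠ 0 → a i x < x)
    (hr0 : ∀ i (x : Fin n), (x : ℕ) = 0 → r i x = 0)
    (hr : ∀ i x, 0 ≤ r i x ∧ r i x ≤ qbar x)
    (heq : ∀ i x, p i x = qbar x - r i x +
      ∑ y ∈ Finset.univ.filter (fun y : Fin n => (y : ℕ) ≠ 0 ∧ a i y = x), r i y) :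
    ∀ x : Fin n, (x : ℕ) ≠ 0 → ∃ j, r j x = 0 := by
  intro x hx
  obtain ⟨j, hj⟩ := (hglb (x : ℕ) (le_of_lt x.isLt)).2
  refine ⟨j, ?_⟩
  set F : Finset (Fin n) := Finset.univ.filter (fun z : Fin n => (z : ℕ) < (x : ℕ)) with hF
  set U : Finset (Fin n) :=
    Finset.univ.filter (fun y : Fin n => (y : ℕ) ≠ 0 ∧ ((a j y : Fin n) : ℕ) < (x : ℕ)) with hU
  set F' : Finset (Fin n) :=
    Finset.univ.filter (fun z : Fin n => (z : ℕ) ≠ 0 ∧ (z : ℕ) < (x : ℕ)) with hF'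
  -- From hj and heq: double sum over F of fiber sums equals sum over F of r j.
  have hsum : ∑ z ∈ F, p j z = ∑ z ∈ F, (qbar z - r j z +
      ∑ y ∈ Finset.univ.filter (fun y : Fin n => (y : ℕ) ≠ 0 ∧ a j y = z), r j y) :=
    Finset.sum_congr rfl (fun z _ => heq j z)
  have hps : partialSum qbar (x : ℕ) = partialSum (p j) (x : ℕ) := hj
  -- the double sum equals sum over U
  have hdouble : ∑ z ∈ F, (∑ y ∈ Finset.univ.filter
      (fun y : Fin n => (y : ℕ) ≠ 0 ∧ a j y = z), r j y) = ∑ y ∈ U, r j y := by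
    rw [Finset.sum_sigma']
    apply Finset.sum_nbij' (fun s => s.2) (fun y => ⟨a j y, y⟩)
    · rintro ⟨z, y⟩ hs
      simp only [hF, hU, Finset.mem_sigma, Finset.mem_filter, Finset.mem_univ,
        true_and] at hs ⊢
      obtain ⟨hz, hy0, hay⟩ := hs
      exact ⟨hy0, by rw [hay]; exact hz⟩
    · intro y hy
      simp only [hF, hU, Finset.mem_sigma, Finset.mem_filter, Finset.mem_univ,
        true_and] at hy ⊢
      exact ⟨hy.2, hy.1, trivial⟩
    · rintro ⟨z, y⟩ hs
      simp only [hF, hU, Finset.mem_sigma, Finset.mem_filter, Finset.mem_univ,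
        true_and] at hs
      simp [hs.2.2]
    · intro y hy; rfl
    · intro s hs; rfl
  have hFsum : ∑ z ∈ F, r j z = ∑ z ∈ F', r j z := by
    symm
    apply Finset.sum_subset
    · intro z hz
      simp only [hF, hF', Finset.mem_filter, Finset.mem_univ, true_and] at hz ⊢
      exact hz.2
    · intro z hz hz'
      simp only [hF, hF', Finset.mem_filter, Finset.mem_univ, true_and] at hz hz'
      exact hr0 j z (by omega)
  have hFF' : F' ⊆ U := by
    intro z hz
    simp only [hF', Finset.mem_filter, Finset.mem_univ, true_and] at hz
    simp only [hU, Finset.mem_filter, Finset.mem_univ, true_and]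
    exact ⟨hz.1, lt_trans (ha j z hz.1) hz.2⟩
  -- From equality of partial sums: sum over U minus sum over F' of r is zero
  have key : ∑ y ∈ U \ F', r j y = 0 := by
    have h1 : ∑ z ∈ F, p j z = ∑ z ∈ F, qbar z - ∑ z ∈ F', r j z + ∑ y ∈ U, r j y := by
      rw [hsum, Finset.sum_add_distrib, Finset.sum_sub_distrib, hdouble, hFsum]
    have h2 : ∑ z ∈ F, p j z = ∑ z ∈ F, qbar z := by
      have := hps
      unfold partialSum at this
      rw [← hF] at this  -- careful; F is defined as that filter
      linarith [this]
    have h3 : ∑ y ∈ U, r j y = ∑ y ∈ F', r j y + ∑ y ∈ U \ F', r j y := by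
      rw [add_comm, Finset.sum_sdiff hFF']
    rw [h2, h3] at h1
    linarith
  have hxU : x ∈ U \ F' := by
    simp only [hU, hF', Finset.mem_sdiff, Finset.mem_filter, Finset.mem_univ, true_and]
    exact ⟨⟨hx, ha j x hx⟩, fun h => absurd h.2 (lt_irrefl _)⟩
  have := (Finset.sum_eq_zero_iff_of_nonneg (fun y _ => (hr j y).1)).1 key x hxU
  exact this

end MEC
end
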